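/- Let M ≥ 2 be an integer and let c > 0 be a constant such that |𝑃_M| ≥ c·M/log M, where 𝑃_M is the set of primes p with ⌈M/2⌉ < p ≤ M. Let d ≥ 1 and let k = (k_1,…,k_d) ∈ ℤ^d \ {0}. Writing N_T = Σ_{p∈𝑃_M} p^2, the composite exponential sum satisfies |(1/N_T) · Σ_{p∈𝑃_M} Σ_{n=0}^{p^2−1} exp(2πi (k_1 n + … + k_d n^d)/p^2)| ≤ 4(d−1)/M + 4·log|k|_∞/(c·M), where |k|_∞ = max_{1≤j≤d} |k_j|. -/

import Mathlib

/-- `𝑃_M`: the set of primes `p` with `⌈M/2⌉ < p ≤ M` (note `⌈M/2⌉ = (M+1)/2` in `ℕ`). -/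
def primesInDyadic (M : ℕ) : Finset ℕ :=
  (Finset.range (M + 1)).filter fun p => Nat.Prime p ∧ (M + 1) / 2 < p

/-!
Write `f(X) = k₁X + ⋯ + k_d X^d`. For a prime `p`, substituting `n = a + p b` (`a, b < p`) gives
`f(a + p b) ≡ f(a) + f'(a) p b (mod p²)`, so the sum over `b` vanishes unless `p ∣ f'(a)`, and
the Korobov sum over `n < p²` has modulus at most `p` times the number of roots of `f'` modulo `p`.
If `p > d` and `p ∤ k_j` for some `j`, then `f'` is a nonzero polynomial of degree `≤ d - 1`
modulo `p`, which yields the bound `(d - 1) p`; if `p ≤ d`, the trivial bound `p² ≤ 2 (d - 1) p`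
suffices. Summed over `𝑃_M`, where `M < 2p`, these primes contribute `≤ 4 (d - 1) N_T / M`.
The remaining primes divide a nonzero `k_j`, so the sum of their logarithms is at most
`log |k|_∞`; since `p² / log p` increases, they contribute at most `M² log |k|_∞ / log M`,
which is `≤ 4 log |k|_∞ N_T / (c M)` because `N_T ≥ |𝑃_M| M² / 4`.
-/

open Finset Polynomial Complex
open scoped Real

theorem norm_exp_two_pi_I_mul_intCast_div (m : ℤ) (q : ℕ) :
    ‖exp (2 * π * I * m / q)‖ = 1 := by
  have : 2 * π * I * m / q = ((2 * π * m / q : ℝ) : ℂ) * I := by push_cast; ring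
  rw [this, norm_exp_ofReal_mul_I]

theorem sum_range_mul_eq_sum_range_sum_range {M : Type*} [AddCommMonoid M] (f : ℕ → M)
    (p q : ℕ) : ∑ n ∈ range (q * p), f n = ∑ a ∈ range p, ∑ b ∈ range q, f (a + p * b) := by
  rw [Finset.sum_range, ← finProdFinEquiv.sum_comp, Fintype.sum_prod_type, Finset.sum_comm]
  simp [Finset.sum_range, finProdFinEquiv_apply_val]

theorem sum_range_exp_two_pi_I_mul_div {q : ℕ} (hq : q ≠ 0) (m : ℤ) :
    ∑ b ∈ range q, exp (2 * π * I * m * b / q) = if (q : ℤ) ∣ m then (q : ℂ) else 0 := by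
  set w := exp (2 * π * I / q) ^ m
  have hζ := isPrimitiveRoot_exp q hq
  have hterm (b : ℕ) : exp (2 * π * I * m * b / q) = w ^ b := by
    rw [← zpow_natCast, ← zpow_mul, ← exp_int_mul]
    push_cast
    ring_nf
  simp only [hterm]
  split_ifs with hdvd
  · simp [w, hζ.zpow_eq_one_iff_dvd m |>.mpr hdvd]
  · have hw : w ≠ 1 := fun h => hdvd (hζ.zpow_eq_one_iff_dvd m |>.mp h)
    have hwq : w ^ q = 1 := by
      rw [← zpow_natCast, ← zpow_mul, mul_comm m, zpow_mul, zpow_natCast, hζ.pow_eq_one, one_zpow]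
    rw [geom_sum_eq hw, hwq, sub_self, zero_div]

noncomputable def expSumModSq (f : ℤ[X]) (p : ℕ) : ℂ :=
  ∑ n ∈ range (p ^ 2), exp (2 * π * I * ((f.eval (n : ℤ) : ℤ) : ℂ) / (p : ℂ) ^ 2)

theorem norm_expSumModSq_le_sq (f : ℤ[X]) (p : ℕ) : ‖expSumModSq f p‖ ≤ p ^ 2 := by
  refine (norm_sum_le _ _).trans ?_
  simp_rw [← Nat.cast_pow, norm_exp_two_pi_I_mul_intCast_div]
  simp

theorem exp_eval_add_mul_div_sq (f : ℤ[X]) {p : ℕ} (hp : p ≠ 0) (a b : ℕ) :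
    exp (2 * π * I * ((f.eval ((a + p * b : ℕ) : ℤ) : ℤ) : ℂ) / (p : ℂ) ^ 2) =
      exp (2 * π * I * ((f.eval (a : ℤ) : ℤ) : ℂ) / (p : ℂ) ^ 2) *
        exp (2 * π * I * ((f.derivative.eval (a : ℤ) : ℤ) : ℂ) * b / p) := by
  obtain ⟨t, ht⟩ := f.binomExpansion a (p * b)
  have harg : 2 * π * I * ((f.eval ((a + p * b : ℕ) : ℤ) : ℤ) : ℂ) / (p : ℂ) ^ 2 =
      2 * π * I * ((f.eval (a : ℤ) : ℤ) : ℂ) / (p : ℂ) ^ 2 +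
        2 * π * I * ((f.derivative.eval (a : ℤ) : ℤ) : ℂ) * b / p +
          (t * b ^ 2 : ℤ) * (2 * π * I) := by
    push_cast [ht]
    field_simp
  rw [harg, exp_add, exp_add, exp_int_mul_two_pi_mul_I, mul_one]

theorem expSumModSq_eq (f : ℤ[X]) {p : ℕ} (hp : p ≠ 0) :
    expSumModSq f p = p * ∑ a ∈ range p with (p : ℤ) ∣ f.derivative.eval ((a : ℕ) : ℤ),
      exp (2 * π * I * ((f.eval (a : ℤ) : ℤ) : ℂ) / (p : ℂ) ^ 2) := by
  rw [expSumModSq, sq p, sum_range_mul_eq_sum_range_sum_range, sum_filter, mul_sum]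
  refine sum_congr rfl fun a _ => ?_
  simp_rw [exp_eval_add_mul_div_sq f hp, ← mul_sum, sum_range_exp_two_pi_I_mul_div hp]
  split_ifs <;> ring

theorem norm_expSumModSq_le (f : ℤ[X]) {p : ℕ} (hp : p ≠ 0) :
    ‖expSumModSq f p‖ ≤ p * #{a ∈ range p | (p : ℤ) ∣ f.derivative.eval ((a : ℕ) : ℤ)} := by
  rw [expSumModSq_eq f hp, norm_mul, Complex.norm_natCast]
  gcongr
  refine (norm_sum_le _ _).trans ?_
  simp_rw [← Nat.cast_pow, norm_exp_two_pi_I_mul_intCast_div]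
  simp

theorem card_filter_dvd_eval_le_natDegree {p : ℕ} [Fact p.Prime] (g : ℤ[X])
    (hg : g.map (Int.castRingHom (ZMod p)) ≠ 0) :
    #{a ∈ range p | (p : ℤ) ∣ g.eval ((a : ℕ) : ℤ)} ≤ g.natDegree := by
  set s := {a ∈ range p | (p : ℤ) ∣ g.eval ((a : ℕ) : ℤ)}
  have hinj : Set.InjOn (Nat.cast : ℕ → ZMod p) s := fun a ha b hb hab => by
    simp only [coe_filter, Finset.mem_range, Set.mem_ofPred_eq, s] at ha hb
    rwa [ZMod.natCast_eq_natCast_iff', Nat.mod_eq_of_lt ha.1, Nat.mod_eq_of_lt hb.1] at hab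
  have hroots :
      (s.image (Nat.cast : ℕ → ZMod p)).val ⊆ (g.map (Int.castRingHom (ZMod p))).roots := by
    intro x hx
    obtain ⟨a, ha, rfl⟩ := Finset.mem_image.mp (Finset.mem_val.mp hx)
    rw [mem_roots hg, IsRoot, ← Int.cast_natCast, eval_intCast_map, eq_intCast,
      ZMod.intCast_zmod_eq_zero_iff_dvd]
    exact (Finset.mem_filter.mp ha).2
  calc #s = #(s.image (Nat.cast : ℕ → ZMod p)) := (card_image_of_injOn hinj).symm
    _ ≤ (g.map (Int.castRingHom (ZMod p))).natDegree := card_le_degree_of_subset_roots hroots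
    _ ≤ g.natDegree := natDegree_map_le

noncomputable def korobovPoly {d : ℕ} (k : Fin d → ℤ) : ℤ[X] :=
  ∑ j : Fin d, C (k j) * X ^ ((j : ℕ) + 1)

theorem intCast_eval_korobovPoly {d : ℕ} (k : Fin d → ℤ) (n : ℕ) :
    (((korobovPoly k).eval (n : ℤ) : ℤ) : ℂ) =
      ∑ j : Fin d, (k j : ℂ) * (n : ℂ) ^ ((j : ℕ) + 1) := by
  simp [korobovPoly, eval_finsetSum]

theorem natDegree_korobovPoly_le {d : ℕ} (k : Fin d → ℤ) : (korobovPoly k).natDegree ≤ d :=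
  natDegree_sum_le_of_forall_le _ _ fun j _ =>
    (natDegree_C_mul_X_pow_le _ _).trans j.isLt

theorem coeff_korobovPoly_succ {d : ℕ} (k : Fin d → ℤ) (j : Fin d) :
    (korobovPoly k).coeff ((j : ℕ) + 1) = k j := by
  simp [korobovPoly, Fin.val_inj]

theorem map_derivative_korobovPoly_ne_zero {d p : ℕ} [Fact p.Prime] (hdp : d < p)
    {k : Fin d → ℤ} {j : Fin d} (hj : ¬ (p : ℤ) ∣ k j) :
    (derivative (korobovPoly k)).map (Int.castRingHom (ZMod p)) ≠ 0 := by
  refine ne_of_apply_ne (coeff · (j : ℕ)) ?_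
  rw [coeff_map, coeff_derivative, coeff_korobovPoly_succ, coeff_zero, eq_intCast, Int.cast_mul]
  refine mul_ne_zero ((ZMod.intCast_zmod_eq_zero_iff_dvd _ _).not.mpr hj) ?_
  have : ((j : ℕ) + 1 : ZMod p) ≠ 0 := by
    rw [← Nat.cast_succ, ne_eq, ZMod.natCast_eq_zero_iff]
    exact Nat.not_dvd_of_pos_of_lt j.succ_pos (by omega)
  exact_mod_cast this

theorem norm_expSumModSq_korobovPoly_le {d p : ℕ} (hp : p.Prime) {k : Fin d → ℤ}
    (hk : ∃ j, ¬ (p : ℤ) ∣ k j) :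
    ‖expSumModSq (korobovPoly k) p‖ ≤ 2 * ((d : ℝ) - 1) * p := by
  have := Fact.mk hp
  obtain ⟨j, hj⟩ := hk
  have hp2 : (2 : ℝ) ≤ p := by exact_mod_cast hp.two_le
  by_cases hdp : d < p
  · have hroots : #{a ∈ range p | (p : ℤ) ∣ (derivative (korobovPoly k)).eval ((a : ℕ) : ℤ)}
        ≤ d - 1 :=
      (card_filter_dvd_eval_le_natDegree _ (map_derivative_korobovPoly_ne_zero hdp hj)).trans <|
        (natDegree_derivative_le _).trans (Nat.sub_le_sub_right (natDegree_korobovPoly_le k) 1)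
    have hd : ((d - 1 : ℕ) : ℝ) = d - 1 := Nat.cast_pred j.pos
    calc ‖expSumModSq (korobovPoly k) p‖ ≤ p * ((d : ℝ) - 1) := by
          refine (norm_expSumModSq_le _ hp.ne_zero).trans ?_
          rw [← hd]
          gcongr
      _ ≤ 2 * ((d : ℝ) - 1) * p := by nlinarith
  · have hpd : (p : ℝ) ≤ d := by exact_mod_cast not_lt.mp hdp
    calc ‖expSumModSq (korobovPoly k) p‖ ≤ p ^ 2 := norm_expSumModSq_le_sq _ _
      _ ≤ 2 * ((d : ℝ) - 1) * p := by nlinarith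

theorem exp_half_le_two : Real.exp (1 / 2) ≤ 2 := by
  rw [← Real.le_log_iff_exp_le two_pos]
  linarith [Real.log_two_gt_d9]

theorem sq_mul_log_le_sq_mul_log {x y : ℝ} (hx : Real.exp (1 / 2) ≤ x) (hxy : x ≤ y) :
    x ^ 2 * Real.log y ≤ y ^ 2 * Real.log x := by
  have hx0 : 0 < x := (Real.exp_pos _).trans_le hx
  have hy0 : 0 < y := hx0.trans_le hxy
  have h := Real.log_div_self_rpow_antitoneOn two_pos (by simpa using hx)
    (by simpa using hx.trans hxy) hxy
  simp only [Real.rpow_two] at h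
  rwa [div_le_div_iff₀ (by positivity) (by positivity), mul_comm, mul_comm (Real.log x)] at h

theorem sum_log_le_log_of_prime_dvd {s : Finset ℕ} {m : ℕ} (hm : m ≠ 0)
    (hs : ∀ p ∈ s, p.Prime ∧ p ∣ m) : ∑ p ∈ s, Real.log p ≤ Real.log m := by
  have hprod : ∏ p ∈ s, p ∣ m :=
    prod_primes_dvd _ (fun p hp => (hs p hp).1.prime) fun p hp => (hs p hp).2
  rw [← Real.log_prod fun p hp => by exact_mod_cast (hs p hp).1.ne_zero, ← Nat.cast_prod]
  exact Real.log_le_log (by exact_mod_cast Nat.pos_of_dvd_of_pos hprod (Nat.pos_of_ne_zero hm))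
    (by exact_mod_cast Nat.le_of_dvd (Nat.pos_of_ne_zero hm) hprod)

theorem mem_primesInDyadic {M p : ℕ} :
    p ∈ primesInDyadic M ↔ p.Prime ∧ (M + 1) / 2 < p ∧ p ≤ M := by
  simp only [primesInDyadic, mem_filter, Finset.mem_range, Nat.lt_succ_iff]
  tauto

theorem lt_two_mul_of_mem_primesInDyadic {M p : ℕ} (hp : p ∈ primesInDyadic M) : M < 2 * p := by
  have := (mem_primesInDyadic.mp hp).2.1
  omega

theorem natCast_mul_sum_primesInDyadic_le (M : ℕ) :
    (M : ℝ) * ∑ p ∈ primesInDyadic M, (p : ℝ) ≤ 2 * ∑ p ∈ primesInDyadic M, (p : ℝ) ^ 2 := by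
  rw [mul_sum, mul_sum]
  refine sum_le_sum fun p hp => ?_
  have : (M : ℝ) ≤ 2 * p := by exact_mod_cast (lt_two_mul_of_mem_primesInDyadic hp).le
  nlinarith [(Nat.cast_nonneg p : (0 : ℝ) ≤ p)]

theorem card_primesInDyadic_mul_sq_le (M : ℕ) :
    ((primesInDyadic M).card : ℝ) * M ^ 2 ≤ 4 * ∑ p ∈ primesInDyadic M, (p : ℝ) ^ 2 := by
  rw [mul_sum, card_eq_sum_ones, Nat.cast_sum, sum_mul]
  push_cast
  refine sum_le_sum fun p hp => ?_
  have : (M : ℝ) ≤ 2 * p := by exact_mod_cast (lt_two_mul_of_mem_primesInDyadic hp).le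
  nlinarith [(Nat.cast_nonneg M : (0 : ℝ) ≤ M)]

theorem sum_sq_mul_log_le_of_dvd {M m : ℕ} (hm : m ≠ 0) {s : Finset ℕ}
    (hs : s ⊆ primesInDyadic M) (hdvd : ∀ p ∈ s, p ∣ m) :
    (∑ p ∈ s, (p : ℝ) ^ 2) * Real.log M ≤ M ^ 2 * Real.log m := by
  have hprime (p) (hp : p ∈ s) := (mem_primesInDyadic.mp (hs hp)).1
  calc (∑ p ∈ s, (p : ℝ) ^ 2) * Real.log M ≤ ∑ p ∈ s, (M : ℝ) ^ 2 * Real.log p := by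
        rw [sum_mul]
        refine sum_le_sum fun p hp => sq_mul_log_le_sq_mul_log ?_ ?_
        · exact exp_half_le_two.trans (by exact_mod_cast (hprime p hp).two_le)
        · exact_mod_cast (mem_primesInDyadic.mp (hs hp)).2.2
    _ ≤ M ^ 2 * Real.log m := by
        rw [← mul_sum]
        gcongr
        exact sum_log_le_log_of_prime_dvd hm fun p hp => ⟨hprime p hp, hdvd p hp⟩

theorem sum_norm_expSumModSq_korobovPoly_le_of_not_dvd {M d : ℕ} {k : Fin d → ℤ} (hd : 1 ≤ d)
    {s : Finset ℕ} (hs : s ⊆ primesInDyadic M) (hk : ∀ p ∈ s, ∃ j, ¬ (p : ℤ) ∣ k j) :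
    ∑ p ∈ s, ‖expSumModSq (korobovPoly k) p‖ ≤
      4 * ((d : ℝ) - 1) / M * ∑ p ∈ primesInDyadic M, (p : ℝ) ^ 2 := by
  have hd1 : (0 : ℝ) ≤ d - 1 := by
    rw [sub_nonneg]
    exact_mod_cast hd
  calc ∑ p ∈ s, ‖expSumModSq (korobovPoly k) p‖ ≤ ∑ p ∈ s, 2 * ((d : ℝ) - 1) * p :=
        sum_le_sum fun p hp =>
          norm_expSumModSq_korobovPoly_le (mem_primesInDyadic.mp (hs hp)).1 (hk p hp)
    _ ≤ ∑ p ∈ primesInDyadic M, 2 * ((d : ℝ) - 1) * p :=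
        sum_le_sum_of_subset_of_nonneg hs fun _ _ _ => by positivity
    _ = 2 * ((d : ℝ) - 1) / M * (M * ∑ p ∈ primesInDyadic M, (p : ℝ)) := by
        rcases Nat.eq_zero_or_pos M with rfl | hM
        · simp [primesInDyadic, filter_singleton, Nat.not_prime_zero]
        · rw [← mul_sum]
          field_simp
    _ ≤ 2 * ((d : ℝ) - 1) / M * (2 * ∑ p ∈ primesInDyadic M, (p : ℝ) ^ 2) :=
        mul_le_mul_of_nonneg_left (natCast_mul_sum_primesInDyadic_le M) (by positivity)
    _ = 4 * ((d : ℝ) - 1) / M * ∑ p ∈ primesInDyadic M, (p : ℝ) ^ 2 := by ring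

theorem sum_norm_expSumModSq_le_of_dvd {M m : ℕ} (hM : 2 ≤ M) (hm : m ≠ 0) {c : ℝ} (hc : 0 < c)
    (hcard : c * M / Real.log M ≤ ((primesInDyadic M).card : ℝ)) (f : ℤ[X]) {s : Finset ℕ}
    (hs : s ⊆ primesInDyadic M) (hdvd : ∀ p ∈ s, p ∣ m) :
    ∑ p ∈ s, ‖expSumModSq f p‖ ≤
      4 * Real.log m / (c * M) * ∑ p ∈ primesInDyadic M, (p : ℝ) ^ 2 := by
  have hlogM : 0 < Real.log M := Real.log_pos (by exact_mod_cast hM)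
  calc ∑ p ∈ s, ‖expSumModSq f p‖ ≤ ∑ p ∈ s, (p : ℝ) ^ 2 :=
        sum_le_sum fun p _ => norm_expSumModSq_le_sq f p
    _ ≤ M ^ 2 * Real.log m / Real.log M := by
        rw [le_div_iff₀ hlogM]
        exact sum_sq_mul_log_le_of_dvd hm hs hdvd
    _ = 4 * Real.log m / (c * M) * (c * M / Real.log M * M ^ 2 / 4) := by
        field_simp
    _ ≤ 4 * Real.log m / (c * M) * ((primesInDyadic M).card * M ^ 2 / 4) := by
        gcongr
    _ ≤ 4 * Real.log m / (c * M) * ∑ p ∈ primesInDyadic M, (p : ℝ) ^ 2 := by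
        gcongr
        linarith [card_primesInDyadic_mul_sq_le M]

theorem sum_norm_expSumModSq_korobovPoly_le {M : ℕ} (hM : 2 ≤ M) {c : ℝ} (hc : 0 < c)
    (hcard : c * M / Real.log M ≤ ((primesInDyadic M).card : ℝ)) {d : ℕ} {k : Fin d → ℤ}
    (hk : k ≠ 0) :
    ∑ p ∈ primesInDyadic M, ‖expSumModSq (korobovPoly k) p‖ ≤
      (4 * ((d : ℝ) - 1) / M +
        4 * Real.log ((Finset.univ.sup fun j : Fin d => (k j).natAbs : ℕ) : ℝ) / (c * M)) *
        ∑ p ∈ primesInDyadic M, (p : ℝ) ^ 2 := by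
  obtain ⟨j₀, hj₀⟩ : ∃ j, k j ≠ 0 := Function.ne_iff.mp hk
  set K := Finset.univ.sup fun j : Fin d => (k j).natAbs
  set B := {p ∈ primesInDyadic M | ∀ j, ((p : ℕ) : ℤ) ∣ k j}
  have hgood := sum_norm_expSumModSq_korobovPoly_le_of_not_dvd (k := k) j₀.pos
    (sdiff_subset : primesInDyadic M \ B ⊆ _)
    fun p hp => by simpa [B, (mem_sdiff.mp hp).1] using (mem_sdiff.mp hp).2
  have hbad : ∑ p ∈ B, ‖expSumModSq (korobovPoly k) p‖ ≤
      4 * Real.log K / (c * M) * ∑ p ∈ primesInDyadic M, (p : ℝ) ^ 2 := by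
    refine (sum_norm_expSumModSq_le_of_dvd hM (Int.natAbs_ne_zero.mpr hj₀) hc hcard _
      (filter_subset _ _ : B ⊆ _) fun p hp => Int.natCast_dvd.mp ((mem_filter.mp hp).2 j₀)).trans ?_
    have hK : (k j₀).natAbs ≤ K := le_sup (f := fun j => (k j).natAbs) (mem_univ j₀)
    gcongr
  rw [← sum_sdiff (filter_subset _ _ : B ⊆ _), add_mul]
  exact add_le_add hgood hbad

theorem composite_korobov_T_exp_sum_bound_general (M : ℕ) (hM : 2 ≤ M) (c : ℝ) (hc : 0 < c)
    (hcard : c * M / Real.log M ≤ ((primesInDyadic M).card : ℝ))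
    (d : ℕ) (k : Fin d → ℤ) (hk : k ≠ 0) :
    ‖(1 / ((∑ p ∈ primesInDyadic M, p ^ 2 : ℕ) : ℂ)) *
        ∑ p ∈ primesInDyadic M, ∑ n ∈ Finset.range (p ^ 2),
          Complex.exp (2 * Real.pi * Complex.I *
            (∑ j : Fin d, (k j : ℂ) * (n : ℂ) ^ ((j : ℕ) + 1)) / (p : ℂ) ^ 2)‖ ≤
      4 * ((d : ℝ) - 1) / M +
        4 * Real.log ((Finset.univ.sup fun j : Fin d => (k j).natAbs : ℕ) : ℝ) / (c * M) := by
  obtain ⟨j₀, -⟩ : ∃ j, k j ≠ 0 := Function.ne_iff.mp hk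
  simp_rw [← intCast_eval_korobovPoly]
  change ‖_ * ∑ p ∈ primesInDyadic M, expSumModSq (korobovPoly k) p‖ ≤ _
  rw [norm_mul, norm_div, norm_one, Complex.norm_natCast, Nat.cast_sum, one_div, inv_mul_eq_div]
  have hd : (0 : ℝ) ≤ d - 1 := by
    rw [sub_nonneg]
    exact_mod_cast j₀.pos
  refine div_le_of_le_mul₀ (by positivity) (by positivity) ?_
  push_cast
  exact (norm_sum_le _ _).trans (sum_norm_expSumModSq_korobovPoly_le hM hc hcard hk)

/-- Let `M ≥ 2`, let `c > 0` with `|𝑃_M| ≥ c·M/log M`, let `d ≥ 1` and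
`k ∈ ℤᵈ \ {0}`. Writing `N_T = ∑_{p∈𝑃_M} p²`, the composite exponential sum over the
composite Korobov point set `T_{M,d}^comp` satisfies
`|(1/N_T) ∑_{p∈𝑃_M} ∑_{n=0}^{p²-1} exp(2πi(k₁n + ⋯ + k_d nᵈ)/p²)|
  ≤ 4(d-1)/M + 4 log|k|_∞ /(c·M)`. -/
theorem composite_korobov_T_exp_sum_bound (M : ℕ) (hM : 2 ≤ M) (c : ℝ) (hc : 0 < c)
    (hcard : c * M / Real.log M ≤ ((primesInDyadic M).card : ℝ))
    (d : ℕ) (hd : 1 ≤ d) (k : Fin d → ℤ) (hk : k ≠ 0) :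
    ‖(1 / ((∑ p ∈ primesInDyadic M, p ^ 2 : ℕ) : ℂ)) *
        ∑ p ∈ primesInDyadic M, ∑ n ∈ Finset.range (p ^ 2),
          Complex.exp (2 * Real.pi * Complex.I *
            (∑ j : Fin d, (k j : ℂ) * (n : ℂ) ^ ((j : ℕ) + 1)) / (p : ℂ) ^ 2)‖ ≤
      4 * ((d : ℝ) - 1) / M +
        4 * Real.log ((Finset.univ.sup fun j : Fin d => (k j).natAbs : ℕ) : ℝ) / (c * M) :=
  composite_korobov_T_exp_sum_bound_general M hM c hc hcard d k hk
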